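/- arXiv:2406.11279 — 5 statements merged into one kernel-verified Lean document; each statement's English description precedes it below -/
import Mathlib

section
/- Let η = r e^{iφ} with r > e and π/4 < φ < π/2 − (log r)/r². Then |2^{2πiη²}| ≤ exp(−2πr² (log 2) sin(2 log r / r²)) ≤ exp(−π (log 2) (log r)) < 1/r. -/
/-!
Writing `η = r e^{iφ}`, one has `|2^{2πiη²}| = exp(-2π r² log 2 · sin 2φ)`. With `x = 2 log r / r² ≤ 1/2`,
the constraints on `φ` put `2φ` in `[x, π - x]`, so `sin 2φ ≥ sin x`.
Jordan's inequality `sin x ≥ 2x/π` then gives `2 r² sin x ≥ 8 log r / π ≥ log r`, and the last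
bound is `π log 2 > 1`.
-/

open Real

lemma re_two_pi_I_mul_sq (r φ : ℝ) :
    (2 * (π : ℂ) * Complex.I * ((r : ℂ) * Complex.exp (Complex.I * φ)) ^ 2).re =
      -(2 * π * r ^ 2 * sin (2 * φ)) := by
  have h : 2 * (π : ℂ) * Complex.I * ((r : ℂ) * Complex.exp (Complex.I * φ)) ^ 2 =
      ((2 * π * r ^ 2 : ℝ) : ℂ) * (Complex.exp ((2 * φ : ℝ) * Complex.I) * Complex.I) := by
    push_cast
    rw [mul_pow, ← Complex.exp_nat_mul]
    ring_nf
  rw [h, Complex.re_ofReal_mul, Complex.mul_I_re, Complex.exp_ofReal_mul_I_im]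
  ring

lemma norm_two_cpow_two_pi_I_mul_sq (r φ : ℝ) :
    ‖(2 : ℂ) ^ (2 * (π : ℂ) * Complex.I * ((r : ℂ) * Complex.exp (Complex.I * φ)) ^ 2)‖ =
      exp (-(2 * π * r ^ 2 * log 2 * sin (2 * φ))) := by
  have h := Complex.norm_cpow_eq_rpow_re_of_pos two_pos
    (2 * (π : ℂ) * Complex.I * ((r : ℂ) * Complex.exp (Complex.I * φ)) ^ 2)
  push_cast at h
  rw [h, re_two_pi_I_mul_sq, rpow_def_of_pos two_pos]
  ring_nf

lemma sin_le_sin_of_le_of_le_pi_sub {x y : ℝ} (hx : 0 ≤ x) (hxy : x ≤ y) (hy : y ≤ π - x) :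
    sin x ≤ sin y := by
  rcases le_total y (π / 2) with h | h
  · exact sin_le_sin_of_le_of_le_pi_div_two (by linarith) h hxy
  · rw [← sin_pi_sub y]
    exact sin_le_sin_of_le_of_le_pi_div_two (by linarith) (by linarith) (by linarith)

lemma two_mul_log_div_sq_le_half {r : ℝ} (hr : 0 < r) : 2 * log r / r ^ 2 ≤ 1 / 2 := by
  rw [div_le_iff₀ (by positivity)]
  nlinarith [log_le_sub_one_of_pos hr, sq_nonneg (r - 2)]

lemma log_le_two_mul_sq_mul_sin {r : ℝ} (hr : 1 ≤ r) :
    log r ≤ 2 * r ^ 2 * sin (2 * log r / r ^ 2) := by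
  have hr0 : 0 < r := by linarith
  have hlog : 0 ≤ log r := log_nonneg hr
  have hx0 : 0 ≤ 2 * log r / r ^ 2 := by positivity
  have hxπ : 2 * log r / r ^ 2 ≤ π / 2 := by
    linarith [two_mul_log_div_sq_le_half hr0, pi_gt_three]
  calc log r ≤ 8 / π * log r := by
        rw [div_mul_eq_mul_div, le_div_iff₀ pi_pos]
        nlinarith [pi_le_four]
    _ = 2 * r ^ 2 * (2 / π * (2 * log r / r ^ 2)) := by field_simp; ring
    _ ≤ 2 * r ^ 2 * sin (2 * log r / r ^ 2) := by gcongr; exact mul_le_sin hx0 hxπ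

lemma one_lt_pi_mul_log_two : 1 < π * log 2 := by
  nlinarith [pi_gt_three, log_two_gt_d9]

theorem stmt_1 (r φ : ℝ) (hr : Real.exp 1 < r)
    (hφ1 : Real.pi / 4 < φ) (hφ2 : φ < Real.pi / 2 - Real.log r / r ^ 2) :
    ‖(2 : ℂ) ^ (2 * (Real.pi : ℂ) * Complex.I *
        ((r : ℂ) * Complex.exp (Complex.I * (φ : ℂ))) ^ 2)‖ ≤
      Real.exp (-(2 * Real.pi * r ^ 2 * Real.log 2 * Real.sin (2 * Real.log r / r ^ 2))) ∧
    Real.exp (-(2 * Real.pi * r ^ 2 * Real.log 2 * Real.sin (2 * Real.log r / r ^ 2))) ≤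
      Real.exp (-(Real.pi * Real.log 2 * Real.log r)) ∧
    Real.exp (-(Real.pi * Real.log 2 * Real.log r)) < 1 / r := by
  have hr1 : 1 < r := (one_lt_exp_iff.2 one_pos).trans hr
  have hr0 : 0 < r := one_pos.trans hr1
  have hlog : 0 < log r := log_pos hr1
  have hlog2 : 0 < log 2 := log_pos one_lt_two
  refine ⟨?_, ?_, ?_⟩
  · rw [norm_two_cpow_two_pi_I_mul_sq, exp_le_exp, neg_le_neg_iff]
    gcongr
    apply sin_le_sin_of_le_of_le_pi_sub (by positivity)
    · linarith [two_mul_log_div_sq_le_half hr0, pi_gt_three]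
    · linarith [show 2 * log r / r ^ 2 = 2 * (log r / r ^ 2) by ring]
  · rw [exp_le_exp, neg_le_neg_iff]
    linarith [mul_le_mul_of_nonneg_left (log_le_two_mul_sq_mul_sin hr1.le)
      (mul_pos pi_pos hlog2).le]
  · rw [one_div, ← exp_log (inv_pos.2 hr0), log_inv, exp_lt_exp, neg_lt_neg_iff]
    linarith [mul_lt_mul_of_pos_right one_lt_pi_mul_log_two hlog]
end

section
/- Let u(η) = 2η² log η − η² + η + i(log 2)/(2π) − 1/8 be holomorphic on the upper half-plane (principal log). Suppose a is in the upper half-plane with |a| > 4 and u(a) = 2n for some integer n. Then for all η on the circle |η − a| = 1 (still in the upper half-plane, assuming the closed unit disc around a lies in the domain), one has |u(η) − 2n| ≥ 4|a||log a| − 3 − 2|log a| − 1/|a| > 1 + |a|. -/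
/-- The function u(η) = 2η² log η − η² + η + i(log 2)/(2π) − 1/8, with the principal
branch of the complex logarithm. -/
noncomputable def u (η : ℂ) : ℂ :=
  2 * η ^ 2 * Complex.log η - η ^ 2 + η +
    Complex.I * (Real.log 2 : ℂ) / (2 * (Real.pi : ℂ)) - 1 / 8

/-!
Write `η = a + w` with `‖w‖ = 1` and `z = w / a`, so `‖z‖ = 1 / ‖a‖ ≤ 1 / 4` and
`log η = log a + log (1 + z)`. Then
`u η - u a = (4 a log a + 1) w + (2 log a + 2) w² + 2 a² f(z)` with
`f(z) = (1 + z)² log (1 + z) - z - 3 z² / 2 = z³ / 3 - z⁴ / 12 + ⋯`. The degree-4 Taylor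
polynomial of `log (1 + z)` with its remainder bound gives `‖f(z)‖ ≤ ‖z‖³ / 2` for `‖z‖ ≤ 1 / 4`,
so the last term is at most `1 / ‖a‖`. The reverse triangle inequality leaves
`4 ‖a‖ ‖log a‖ - 1 - (2 ‖log a‖ + 2) - 1 / ‖a‖`.
-/

open Complex

lemma Complex.log_mul_of_im_pos {x y : ℂ} (hx : 0 < x.im) (hy : 0 < y.re)
    (hxy : 0 < (x * y).im) : log (x * y) = log x + log y := by
  have hx₀ : x ≠ 0 := fun h => by simp [h] at hx
  have hy₀ : y ≠ 0 := fun h => by simp [h] at hy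
  have hargx_nonneg := arg_nonneg_iff.2 hx.le
  have hargx_lt := arg_lt_pi_iff.2 (Or.inr hx.ne')
  have hargy := abs_lt.1 (abs_arg_lt_pi_div_two_iff.2 (Or.inl hy))
  refine log_mul hx₀ hy₀ ⟨by linarith, not_lt.1 fun hgt => ?_⟩
  have hwrap : arg (x * y) = arg x + arg y - 2 * Real.pi := by
    have hangle : ((arg x + arg y : ℝ) : Real.Angle) = (arg x + arg y - 2 * Real.pi : ℝ) := by
      rw [Real.Angle.coe_sub, Real.Angle.coe_two_pi, sub_zero]
    rw [arg_coe_angle_eq_iff_eq_toReal.1 (arg_mul_coe_angle hx₀ hy₀), ← Real.Angle.coe_add,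
      hangle, Real.Angle.toReal_coe_eq_self_iff_mem_Ioc.2 ⟨by linarith, by linarith⟩]
  linarith [arg_nonneg_iff.2 hxy.le]

lemma norm_one_add_sq_mul_log_sub_le {z : ℂ} (hz : ‖z‖ ≤ 1 / 4) :
    ‖(1 + z) ^ 2 * log (1 + z) - z - 3 / 2 * z ^ 2‖ ≤ ‖z‖ ^ 3 / 2 := by
  set s := ‖z‖
  have hs : 0 ≤ s := norm_nonneg z
  have hE := norm_log_sub_logTaylor_le 4 (hz.trans_lt (by norm_num))
  have htaylor : logTaylor (4 + 1) z = z - z ^ 2 / 2 + z ^ 3 / 3 - z ^ 4 / 4 := by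
    simp [logTaylor, Finset.sum_range_succ]; ring
  rw [htaylor] at hE
  set E := log (1 + z) - (z - z ^ 2 / 2 + z ^ 3 / 3 - z ^ 4 / 4)
  have hexpand : (1 + z) ^ 2 * log (1 + z) - z - 3 / 2 * z ^ 2
      = z ^ 3 * (1 / 3 - z / 12 - z ^ 2 / 6 - z ^ 3 / 4) + (1 + z) ^ 2 * E := by
    simp only [E]; ring
  have hpoly : ‖(1 / 3 - z / 12 - z ^ 2 / 6 - z ^ 3 / 4 : ℂ)‖
      ≤ 1 / 3 + s / 12 + s ^ 2 / 6 + s ^ 3 / 4 := by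
    refine (norm_sub_le _ _).trans (add_le_add ((norm_sub_le _ _).trans
      (add_le_add ((norm_sub_le _ _).trans (add_le_add ?_ ?_)) ?_)) ?_) <;> simp [s]
  have hsq : ‖(1 + z) ^ 2‖ ≤ (1 + s) ^ 2 := by
    rw [norm_pow]; gcongr; exact (norm_add_le _ _).trans (by simp [s])
  have hinv : (1 - s)⁻¹ ≤ 4 / 3 := by
    rw [inv_le_comm₀ (by linarith) (by norm_num)]; linarith
  calc ‖(1 + z) ^ 2 * log (1 + z) - z - 3 / 2 * z ^ 2‖
      ≤ s ^ 3 * (1 / 3 + s / 12 + s ^ 2 / 6 + s ^ 3 / 4)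
          + (1 + s) ^ 2 * (s ^ 5 * (4 / 3) / 5) := by
        rw [hexpand]
        refine (norm_add_le _ _).trans (add_le_add ?_ ?_) <;> rw [norm_mul]
        · rw [norm_pow]; gcongr
        · gcongr
          refine hE.trans ?_
          norm_num only
          gcongr
    _ ≤ s ^ 3 / 2 := by
        have h := pow_nonneg hs 3
        nlinarith [mul_nonneg h hs, mul_nonneg h (sq_nonneg s), mul_nonneg h (pow_nonneg hs 3),
          mul_nonneg (mul_nonneg h hs) (by linarith : (0:ℝ) ≤ 1/4 - s)]

lemma u_add_sub_u {a w : ℂ} (ha : a ≠ 0) (hlog : log (a + w) = log a + log (1 + w / a)) :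
    u (a + w) - u a = (4 * a * log a + 1) * w + (2 * log a + 2) * w ^ 2
      + 2 * a ^ 2 * ((1 + w / a) ^ 2 * log (1 + w / a) - w / a - 3 / 2 * (w / a) ^ 2) := by
  rw [u, u, hlog]
  field_simp
  ring

lemma norm_u_add_sub_u_ge {a w : ℂ} (ha : 4 ≤ ‖a‖) (hw : ‖w‖ = 1)
    (hlog : log (a + w) = log a + log (1 + w / a)) :
    4 * ‖a‖ * ‖log a‖ - 3 - 2 * ‖log a‖ - 1 / ‖a‖ ≤ ‖u (a + w) - u a‖ := by
  have hr : 0 < ‖a‖ := by linarith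
  have ha₀ : a ≠ 0 := norm_pos_iff.1 hr
  have hz : ‖w / a‖ = 1 / ‖a‖ := by rw [norm_div, hw]
  have hlinear : 4 * ‖a‖ * ‖log a‖ - 1 ≤ ‖(4 * a * log a + 1) * w‖ := by
    have h := norm_sub_norm_le (4 * a * log a) (-1)
    rw [sub_neg_eq_add, norm_neg, norm_one] at h
    simpa [hw] using h
  have hquadratic : ‖(2 * log a + 2) * w ^ 2‖ ≤ 2 * ‖log a‖ + 2 := by
    simpa [hw] using norm_add_le (2 * log a) 2
  have hremainder : ‖2 * a ^ 2 * ((1 + w / a) ^ 2 * log (1 + w / a) - w / a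
      - 3 / 2 * (w / a) ^ 2)‖ ≤ 1 / ‖a‖ := by
    have h := norm_one_add_sq_mul_log_sub_le (z := w / a) (by rw [hz]; gcongr)
    rw [hz] at h
    calc _ = 2 * ‖a‖ ^ 2 * ‖(1 + w / a) ^ 2 * log (1 + w / a) - w / a
          - 3 / 2 * (w / a) ^ 2‖ := by rw [norm_mul, norm_mul, norm_pow]; norm_num
      _ ≤ 2 * ‖a‖ ^ 2 * ((1 / ‖a‖) ^ 3 / 2) := by gcongr
      _ = 1 / ‖a‖ := by field_simp
  rw [u_add_sub_u ha₀ hlog]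
  set M := (4 * a * log a + 1) * w
  set Q := (2 * log a + 2) * w ^ 2
  set R := 2 * a ^ 2 * ((1 + w / a) ^ 2 * log (1 + w / a) - w / a - 3 / 2 * (w / a) ^ 2)
  have hM : ‖M‖ ≤ ‖M + Q + R‖ + ‖R‖ + ‖Q‖ :=
    calc ‖M‖ = ‖M + Q + R - R - Q‖ := by ring_nf
      _ ≤ _ := (norm_sub_le _ _).trans (add_le_add_left (norm_sub_le _ _) _)
  linarith

theorem stmt_10 (a : ℂ) (him : 0 < a.im) (ha : 4 < ‖a‖)
    (hlog : 1 ≤ ‖Complex.log a‖)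
    (hdisc : ∀ z : ℂ, ‖z - a‖ ≤ 1 → 0 < z.im)
    (n : ℤ) (hu : u a = 2 * n) :
    ∀ η : ℂ, ‖η - a‖ = 1 →
      4 * ‖a‖ * ‖Complex.log a‖ - 3 -
          2 * ‖Complex.log a‖ - 1 / ‖a‖ ≤
        ‖u η - 2 * n‖ ∧
      1 + ‖a‖ <
        4 * ‖a‖ * ‖Complex.log a‖ - 3 -
          2 * ‖Complex.log a‖ - 1 / ‖a‖ := by
  intro η hη
  have ha₀ : a ≠ 0 := norm_pos_iff.1 (by linarith)
  have hz : ‖(η - a) / a‖ < 1 := by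
    rw [norm_div, hη, div_lt_one (by linarith)]; linarith
  have hre : 0 < (1 + (η - a) / a).re := by
    have hneg := neg_abs_le ((η - a) / a).re
    have habs := (abs_re_le_norm ((η - a) / a)).trans_lt hz
    simp only [add_re, one_re]; linarith
  have hη_eq : a * (1 + (η - a) / a) = η := by field_simp; ring
  have hsplit : log (a + (η - a)) = log a + log (1 + (η - a) / a) := by
    rw [← log_mul_of_im_pos him hre (by rw [hη_eq]; exact hdisc η hη.le), hη_eq, add_sub_cancel]
  refine ⟨?_, ?_⟩
  · simpa [hu] using norm_u_add_sub_u_ge ha.le hη hsplit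
  · have hinv : 1 / ‖a‖ < 1 := by rw [div_lt_one (by linarith)]; linarith
    nlinarith [mul_nonneg (by linarith : 0 ≤ 4 * ‖a‖ - 2) (by linarith : 0 ≤ ‖log a‖ - 1)]
end

section
/- Let V ⊂ ℂ be open, and f, g : V → ℂ holomorphic with: (a) there is B > 0 with |f(z) − g(z)| ≤ (B/|z|)|g(z)| on V; (b) there are 0 < c < C with c|z|log|z| ≤ |g'(z)/g(z)| ≤ C|z|log|z| on V (in particular g never vanishes); (c) there are r₀, ρ₀ > 0 such that every w ∈ V with (f(w) = 1 or g(w) = 1) and |w| > r₀ has closed disc D̄(w, ρ₀) ⊂ V. Then there exists R > 0 such that for every b ∈ V with g(b) = 1 and |b| > R, there is a unique a ∈ V with f(a) = 1 and |b − a| < |b|^{−2}. -/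
/-!
Fix `b` with `g b = 1` and `r = ‖b‖` large, and put `λ = g' b`, so `‖λ‖ ≥ c r log r`. On the
disc of radius `ρ₀` around `b` the logarithmic derivative `w = g' / g` is at most
`W = 4 C r log r`. On the disc of radius `r⁻²` this keeps `‖g‖ ≤ 2` and `‖g - 1‖ ≤ 2 W r⁻²`,
the Schwarz lemma gives `‖w - λ‖ = O(W r⁻²)`, and the Cauchy estimate applied to
`‖f - g‖ ≤ 4 B / r` gives `‖(f - g)'‖ = O(B r)`. Since `f' - λ = w (g - 1) + (w - λ) + (f - g)'`,
all these errors are `o(r log r)`, hence `‖f' - λ‖ ≤ ‖λ‖ / 2` there. So `f - 1` is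
`‖λ‖ / 2`-close to the linear map `z ↦ λ z` in Lipschitz norm: it is injective on the disc,
and by the quantitative inverse function theorem it vanishes within
`2 ‖f b - 1‖ / ‖λ‖ = O(1 / (r² log r))` of `b`.
-/

open Metric Set Filter Real

theorem mapsTo_closedBall_of_forall_norm_le {α E : Type*} [SeminormedAddCommGroup E]
    {F : α → E} {s : Set α} {c : α} {M : ℝ}
    (hc : c ∈ s) (hM : ∀ x ∈ s, ‖F x‖ ≤ M) : MapsTo F s (closedBall (F c) (2 * M)) :=
  fun x hx => by
    rw [mem_closedBall, dist_eq_norm]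
    linarith [norm_sub_le (F x) (F c), hM x hx, hM c hc]

section Holomorphic

variable {E : Type*} [NormedAddCommGroup E] [NormedSpace ℂ E]

theorem Complex.norm_sub_le_of_forall_norm_le {F : ℂ → E} {b z : ℂ} {ρ M : ℝ}
    (hF : DifferentiableOn ℂ F (ball b ρ)) (hM : ∀ x ∈ ball b ρ, ‖F x‖ ≤ M)
    (hz : z ∈ ball b ρ) : ‖F z - F b‖ ≤ 2 * M / ρ * ‖z - b‖ := by
  simpa only [dist_eq_norm] using Complex.dist_le_div_mul_dist_of_mapsTo_ball hF
    (mapsTo_closedBall_of_forall_norm_le (mem_ball_self (pos_of_mem_ball hz)) hM) hz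

theorem Complex.norm_deriv_le_of_forall_norm_le {F : ℂ → E} {z : ℂ} {δ M : ℝ}
    (hF : DifferentiableOn ℂ F (ball z δ)) (hM : ∀ x ∈ ball z δ, ‖F x‖ ≤ M) (hδ : 0 < δ) :
    ‖deriv F z‖ ≤ 2 * M / δ :=
  Complex.norm_deriv_le_div_of_mapsTo_ball hF
    (mapsTo_closedBall_of_forall_norm_le (mem_ball_self hδ) hM) hδ

theorem norm_le_two_mul_of_norm_deriv_le_mul {g : ℂ → E} {b : ℂ} {s W : ℝ}
    (hg : ∀ z ∈ closedBall b s, DifferentiableAt ℂ g z) (hW0 : 0 ≤ W)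
    (hW : ∀ z ∈ closedBall b s, ‖deriv g z‖ ≤ W * ‖g z‖) (hWs : W * s ≤ 1 / 2) :
    ∀ z ∈ closedBall b s, ‖g z‖ ≤ 2 * ‖g b‖ := by
  intro z hz
  have hb : b ∈ closedBall b s := mem_closedBall_self (dist_nonneg.trans hz)
  -- at a maximum point `z₀` of `‖g‖`, the mean value theorem gives `‖g z₀‖ ≤ ‖g b‖ + ‖g z₀‖ / 2`
  obtain ⟨z₀, hz₀, hmax⟩ := (isCompact_closedBall b s).exists_isMaxOn ⟨z, hz⟩
    (continuous_norm.comp_continuousOn fun x hx => (hg x hx).continuousAt.continuousWithinAt)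
  have hMVT : ‖g z₀ - g b‖ ≤ W * ‖g z₀‖ * ‖z₀ - b‖ :=
    (convex_closedBall b s).norm_image_sub_le_of_norm_deriv_le hg
      (fun x hx => (hW x hx).trans (mul_le_mul_of_nonneg_left (hmax hx) hW0)) hb hz₀
  have hz₀b : ‖z₀ - b‖ ≤ s := by rwa [← dist_eq_norm, ← mem_closedBall]
  have hhalf : W * ‖g z₀‖ * ‖z₀ - b‖ ≤ ‖g z₀‖ / 2 := by
    nlinarith [mul_le_mul_of_nonneg_left hz₀b (mul_nonneg hW0 (norm_nonneg (g z₀))),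
      mul_le_mul_of_nonneg_left hWs (norm_nonneg (g z₀))]
  linarith [norm_le_norm_add_norm_sub' (g z₀) (g b), show ‖g z‖ ≤ ‖g z₀‖ from hmax hz]

theorem norm_sub_le_of_norm_deriv_le_mul {g : ℂ → E} {b : ℂ} {s W : ℝ}
    (hg : ∀ z ∈ closedBall b s, DifferentiableAt ℂ g z) (hW0 : 0 ≤ W)
    (hW : ∀ z ∈ closedBall b s, ‖deriv g z‖ ≤ W * ‖g z‖) (hWs : W * s ≤ 1 / 2) :
    ∀ z ∈ closedBall b s, ‖g z - g b‖ ≤ 2 * W * ‖g b‖ * ‖z - b‖ := by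
  intro z hz
  have hg2 := norm_le_two_mul_of_norm_deriv_le_mul hg hW0 hW hWs
  refine (convex_closedBall b s).norm_image_sub_le_of_norm_deriv_le hg (fun x hx => ?_)
    (mem_closedBall_self (dist_nonneg.trans hz)) hz
  calc ‖deriv g x‖ ≤ W * ‖g x‖ := hW x hx
    _ ≤ W * (2 * ‖g b‖) := mul_le_mul_of_nonneg_left (hg2 x hx) hW0
    _ = 2 * W * ‖g b‖ := by ring

theorem norm_deriv_sub_deriv_le {f g : ℂ → ℂ} {b : ℂ} {ρ δ W η : ℝ}
    (hf : DifferentiableOn ℂ f (ball b ρ)) (hg : DifferentiableOn ℂ g (ball b ρ))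
    (hgb : g b = 1) (hg0 : ∀ z ∈ ball b ρ, g z ≠ 0)
    (hW : ∀ z ∈ ball b ρ, ‖deriv g z / g z‖ ≤ W)
    (hfg : ∀ z ∈ ball b ρ, ‖f z - g z‖ ≤ η * ‖g z‖)
    (hδ : 0 < δ) (hδρ : 4 * δ ≤ ρ) (hWδ : 4 * W * δ ≤ 1) :
    ∀ z ∈ ball b δ, ‖deriv f z - deriv g b‖ ≤ 2 * W ^ 2 * δ + 2 * W * δ / ρ + 4 * η / δ := by
  set w := fun z => deriv g z / g z
  have hρ : 0 < ρ := by linarith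
  have hW0 : 0 ≤ W := (norm_nonneg _).trans (hW b (mem_ball_self hρ))
  have hη0 : 0 ≤ η := by simpa [hgb] using (norm_nonneg _).trans (hfg b (mem_ball_self hρ))
  have hball : closedBall b (2 * δ) ⊆ ball b ρ := closedBall_subset_ball (by linarith)
  have hgd : ∀ z ∈ ball b ρ, DifferentiableAt ℂ g z :=
    fun z hz => hg.differentiableAt (isOpen_ball.mem_nhds hz)
  have hderiv : ∀ z ∈ ball b ρ, deriv g z = w z * g z :=
    fun z hz => (div_mul_cancel₀ _ (hg0 z hz)).symm
  have hgW : ∀ z ∈ closedBall b (2 * δ), ‖deriv g z‖ ≤ W * ‖g z‖ := fun z hz => by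
    rw [hderiv z (hball hz), norm_mul]
    exact mul_le_mul_of_nonneg_right (hW z (hball hz)) (norm_nonneg _)
  have hWδ' : W * (2 * δ) ≤ 1 / 2 := by linarith
  have hg2 : ∀ z ∈ closedBall b (2 * δ), ‖g z‖ ≤ 2 := by
    simpa [hgb] using
      norm_le_two_mul_of_norm_deriv_le_mul (fun z hz => hgd z (hball hz)) hW0 hgW hWδ'
  have hg1 : ∀ z ∈ ball b δ, ‖g z - 1‖ ≤ 2 * W * δ := fun z hz => by
    have hz' : z ∈ closedBall b (2 * δ) := closedBall_subset_closedBall (by linarith)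
      (ball_subset_closedBall hz)
    calc ‖g z - 1‖ ≤ 2 * W * ‖g b‖ * ‖z - b‖ := by
          simpa [hgb] using norm_sub_le_of_norm_deriv_le_mul (fun z hz => hgd z (hball hz)) hW0 hgW
            hWδ' z hz'
      _ ≤ 2 * W * δ := by
          rw [hgb, norm_one, mul_one]
          gcongr
          exact (mem_ball_iff_norm.1 hz).le
  have hwb : ∀ z ∈ ball b δ, ‖w z - deriv g b‖ ≤ 2 * W * δ / ρ := fun z hz => by
    have hwd : DifferentiableOn ℂ w (ball b ρ) := (hg.deriv isOpen_ball).div hg hg0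
    have hz' : z ∈ ball b ρ := ball_subset_ball (by linarith) hz
    calc ‖w z - deriv g b‖ = ‖w z - w b‖ := by simp [w, hgb]
      _ ≤ 2 * W / ρ * ‖z - b‖ := Complex.norm_sub_le_of_forall_norm_le hwd hW hz'
      _ ≤ 2 * W / ρ * δ := by
        gcongr
        exact (mem_ball_iff_norm.1 hz).le
      _ = 2 * W * δ / ρ := by ring
  have hfg' : ∀ z ∈ ball b δ, ‖deriv f z - deriv g z‖ ≤ 4 * η / δ := fun z hz => by
    have hsub : ball z δ ⊆ closedBall b (2 * δ) := fun x hx => by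
      rw [mem_closedBall]
      linarith [dist_triangle x z b, mem_ball.1 hx, mem_ball.1 hz]
    have hz' := hball (hsub (mem_ball_self hδ))
    rw [← deriv_sub (hf.differentiableAt (isOpen_ball.mem_nhds hz')) (hgd z hz'),
      show 4 * η = 2 * (2 * η) by ring]
    refine Complex.norm_deriv_le_of_forall_norm_le ((hf.sub hg).mono (hsub.trans hball))
      (fun x hx => ?_) hδ
    exact (hfg x (hball (hsub hx))).trans (by nlinarith [hg2 x (hsub hx), norm_nonneg (g x)])
  intro z hz
  have hz' : z ∈ ball b ρ := ball_subset_ball (by linarith) hz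
  calc ‖deriv f z - deriv g b‖
      = ‖w z * (g z - 1) + (w z - deriv g b) + (deriv f z - deriv g z)‖ := by
        rw [hderiv z hz']; ring_nf
    _ ≤ ‖w z‖ * ‖g z - 1‖ + ‖w z - deriv g b‖ + ‖deriv f z - deriv g z‖ := by
        grw [norm_add₃_le, norm_mul]
    _ ≤ W * (2 * W * δ) + 2 * W * δ / ρ + 4 * η / δ := by
        gcongr
        · exact hW z hz'
        · exact hg1 z hz
        · exact hwb z hz
        · exact hfg' z hz
    _ = 2 * W ^ 2 * δ + 2 * W * δ / ρ + 4 * η / δ := by ring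

theorem Complex.existsUnique_zero_of_norm_deriv_sub_le {F : ℂ → ℂ} {b l : ℂ} {s : ℝ}
    (hF : DifferentiableOn ℂ F (ball b s)) (hl : l ≠ 0)
    (hF' : ∀ z ∈ ball b s, ‖deriv F z - l‖ ≤ ‖l‖ / 2) (hFb : 2 * ‖F b‖ < ‖l‖ * s) :
    ∃! a, a ∈ ball b s ∧ F a = 0 := by
  have hl0 : 0 < ‖l‖ := norm_pos_iff.2 hl
  have happrox : ApproximatesLinearOn F (l • ContinuousLinearMap.id ℂ ℂ) (ball b s)
      (‖l‖₊ / 2) := by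
    intro x hx y hy
    have hG (z) (hz : z ∈ ball b s) :
        HasDerivWithinAt (fun z => F z - l * z) (deriv F z - l) (ball b s) z := by
      simpa using ((hF.differentiableAt (isOpen_ball.mem_nhds hz)).hasDerivAt.fun_sub
          ((hasDerivAt_id z).const_mul l)).hasDerivWithinAt
    convert (convex_ball b s).norm_image_sub_le_of_norm_hasDerivWithin_le hG hF' hy hx using 2
    · rw [smul_apply, ContinuousLinearMap.id_apply, smul_eq_mul]
      ring
    · rw [NNReal.coe_div, coe_nnnorm, NNReal.coe_ofNat]
  let inv : (l • ContinuousLinearMap.id ℂ ℂ).NonlinearRightInverse :=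
    { toFun := fun y => y / l
      nnnorm := ‖l‖₊⁻¹
      bound' := fun y => by simp [div_eq_inv_mul]
      right_inv' := fun y => by simp [mul_div_cancel₀ _ hl] }
  have hε : closedBall b (2 * ‖F b‖ / ‖l‖) ⊆ ball b s :=
    closedBall_subset_ball ((div_lt_iff₀ hl0).2 (by linarith))
  have h0 : (0 : ℂ) ∈ closedBall (F b) (((inv.nnnorm : ℝ)⁻¹ - ‖l‖₊ / 2) * (2 * ‖F b‖ / ‖l‖)) := by
    rw [mem_closedBall, dist_zero_left]
    simp only [inv, NNReal.coe_inv, coe_nnnorm, inv_inv]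
    field_simp
    linarith
  obtain ⟨a, ha, hFa⟩ :=
    happrox.surjOn_closedBall_of_nonlinearRightInverse inv (by positivity) hε h0
  refine ⟨a, ⟨hε ha, hFa⟩, fun y ⟨hy, hFy⟩ => ?_⟩
  have h := happrox y hy a (hε ha)
  rw [hFy, hFa, sub_zero, zero_sub, norm_neg] at h
  simp only [smul_apply, ContinuousLinearMap.id_apply, smul_eq_mul, norm_mul,
    NNReal.coe_div, coe_nnnorm, NNReal.coe_ofNat] at h
  have : ‖y - a‖ = 0 := by nlinarith [norm_nonneg (y - a)]
  exact sub_eq_zero.1 (norm_eq_zero.1 this)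

theorem existsUnique_mem_ball_eq_one {f g : ℂ → ℂ} {b : ℂ} {ρ δ W η : ℝ}
    (hf : DifferentiableOn ℂ f (ball b ρ)) (hg : DifferentiableOn ℂ g (ball b ρ))
    (hgb : g b = 1) (hg0 : ∀ z ∈ ball b ρ, g z ≠ 0)
    (hW : ∀ z ∈ ball b ρ, ‖deriv g z / g z‖ ≤ W)
    (hfg : ∀ z ∈ ball b ρ, ‖f z - g z‖ ≤ η * ‖g z‖)
    (hδ : 0 < δ) (hδρ : 4 * δ ≤ ρ) (hWδ : 4 * W * δ ≤ 1)
    (herr : 2 * W ^ 2 * δ + 2 * W * δ / ρ + 4 * η / δ ≤ ‖deriv g b‖ / 2)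
    (hη : 2 * η < ‖deriv g b‖ * δ) :
    ∃! a, a ∈ ball b δ ∧ f a = 1 := by
  have hfb : ‖f b - 1‖ ≤ η := by
    simpa [hgb] using hfg b (mem_ball_self (by linarith))
  have hl : deriv g b ≠ 0 := by
    rintro h
    rw [h, norm_zero, zero_mul] at hη
    linarith [norm_nonneg (f b - 1)]
  have hδρ' : ball b δ ⊆ ball b ρ := ball_subset_ball (by linarith)
  simpa [sub_eq_zero] using Complex.existsUnique_zero_of_norm_deriv_sub_le
    ((hf.mono hδρ').sub_const 1) hl
    (fun z hz => by
      rw [deriv_sub_const]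
      exact (norm_deriv_sub_deriv_le hf hg hgb hg0 hW hfg hδ hδρ hWδ z hz).trans herr)
    (by linarith)

end Holomorphic

theorem mul_log_le_four_mul_mul_log {x r : ℝ} (hx : 1 ≤ x) (hxr : x ≤ 2 * r) (hr : 2 ≤ r) :
    x * log x ≤ 4 * r * log r := by
  have hlog : log x ≤ 2 * log r := by
    rw [← log_rpow (by linarith)]
    exact log_le_log (by linarith) (by norm_num; nlinarith)
  nlinarith [log_nonneg hx]

theorem eventually_log_le_mul {ε : ℝ} (hε : 0 < ε) : ∀ᶠ r : ℝ in atTop, log r ≤ ε * r := by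
  filter_upwards [isLittleO_log_id_atTop.bound hε, eventually_ge_atTop 1] with r h hr
  simpa [abs_of_nonneg (log_nonneg hr), abs_of_nonneg (by linarith : (0 : ℝ) ≤ r)] using h

/-- The hypotheses of `existsUnique_mem_ball_eq_one` for `W = 4 C r log r`, `δ = r⁻²`,
`η = 2 B / r` and `‖deriv g b‖ ≥ c r log r`, together with `2 ρ + 2 ≤ r`, which keeps
`‖z‖ ∈ [max 2 (r / 2), 2 r]` on `ball b ρ` when `‖b‖ = r`. -/
def IsRootScale (B c C ρ r : ℝ) : Prop :=
  2 * ρ + 2 ≤ r ∧ 4 * (r ^ 2)⁻¹ ≤ ρ ∧ 4 * (4 * C * r * log r) * (r ^ 2)⁻¹ ≤ 1 ∧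
    2 * (4 * C * r * log r) ^ 2 * (r ^ 2)⁻¹ + 2 * (4 * C * r * log r) * (r ^ 2)⁻¹ / ρ
      + 4 * (2 * B / r) / (r ^ 2)⁻¹ ≤ c * r * log r / 2 ∧
    2 * (2 * B / r) < c * r * log r * (r ^ 2)⁻¹

theorem eventually_isRootScale {B c C ρ : ℝ} (hc : 0 < c) (hC : 0 < C) (hρ : 0 < ρ) :
    ∀ᶠ r : ℝ in atTop, IsRootScale B c C ρ r := by
  filter_upwards [tendsto_log_atTop.eventually_ge_atTop (48 * |B| / c + 1),
    eventually_log_le_mul (by positivity : 0 < (16 * C)⁻¹),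
    eventually_log_le_mul (by positivity : 0 < c / (192 * C ^ 2)),
    eventually_ge_atTop (4 / ρ + 48 * C / (c * ρ) + 1), eventually_ge_atTop (2 * ρ + 2)]
    with r hL hL₁ hL₂ hr hρr
  have hr1 : 1 ≤ r := by
    have : 0 ≤ 4 / ρ + 48 * C / (c * ρ) := by positivity
    linarith
  have hr0 : 0 < r := by linarith
  have hrr : r ≤ r ^ 2 := by nlinarith
  set L := log r
  have hL0 : 0 ≤ L := log_nonneg hr1
  have hBL : 48 * |B| + c ≤ c * L := by
    rw [div_add_one hc.ne', div_le_iff₀ hc] at hL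
    linarith
  have hB : B ≤ |B| := le_abs_self B
  have h16 : 16 * C * L ≤ r := by
    rw [← le_div_iff₀' (by positivity), div_eq_inv_mul]; exact hL₁
  have h192 : 192 * C ^ 2 * L ≤ c * r := by
    rw [← le_div_iff₀' (by positivity), mul_div_right_comm]; exact hL₂
  have h4 : 4 / ρ ≤ r := by
    linarith [div_nonneg (by positivity : 0 ≤ 48 * C) (by positivity : 0 ≤ c * ρ)]
  have h48 : 48 * C / (c * ρ) ≤ r := by linarith [div_nonneg zero_le_four hρ.le]
  rw [div_le_iff₀ hρ] at h4
  rw [div_le_iff₀ (by positivity)] at h48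
  refine ⟨hρr, ?_, ?_, ?_, ?_⟩
  · rw [← div_eq_mul_inv, div_le_iff₀ (by positivity)]
    nlinarith
  · rw [show 4 * (4 * C * r * L) * (r ^ 2)⁻¹ = 16 * C * L / r by field_simp; ring,
      div_le_one hr0]
    exact h16
  · rw [show 2 * (4 * C * r * L) ^ 2 * (r ^ 2)⁻¹ = 32 * C ^ 2 * L ^ 2 by field_simp; ring,
      show 2 * (4 * C * r * L) * (r ^ 2)⁻¹ / ρ = 8 * C * L / (r * ρ) by field_simp; ring,
      show 4 * (2 * B / r) / (r ^ 2)⁻¹ = 8 * B * r by field_simp; ring]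
    have : 8 * C * L / (r * ρ) ≤ c * r * L / 6 := by
      rw [div_le_iff₀ (by positivity)]
      nlinarith [mul_le_mul_of_nonneg_right h48 hL0,
        mul_le_mul_of_nonneg_left hrr (by positivity : 0 ≤ c * ρ * L)]
    nlinarith [mul_le_mul_of_nonneg_right h192 hL0]
  · rw [show 2 * (2 * B / r) = 4 * B / r by ring,
      show c * r * L * (r ^ 2)⁻¹ = c * L / r by field_simp]
    exact div_lt_div_of_pos_right (by linarith [abs_nonneg B]) hr0

theorem existsUnique_mem_ball_inv_sq_eq_one {f g : ℂ → ℂ} {b : ℂ} {B c C ρ : ℝ}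
    (hf : DifferentiableOn ℂ f (ball b ρ)) (hg : DifferentiableOn ℂ g (ball b ρ))
    (hB : 0 < B) (hc : 0 < c) (hC : 0 < C)
    (hfg : ∀ z ∈ ball b ρ, ‖f z - g z‖ ≤ B / ‖z‖ * ‖g z‖)
    (hlog : ∀ z ∈ ball b ρ, c * ‖z‖ * log ‖z‖ ≤ ‖deriv g z / g z‖ ∧
      ‖deriv g z / g z‖ ≤ C * ‖z‖ * log ‖z‖)
    (hgb : g b = 1) (hr : IsRootScale B c C ρ ‖b‖) :
    ∃! a, a ∈ ball b (‖b‖ ^ 2)⁻¹ ∧ f a = 1 := by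
  obtain ⟨hb, hδρ, hWδ, herr, hη⟩ := hr
  have hb0 : 0 < ‖b‖ := by linarith [inv_nonneg.2 (sq_nonneg ‖b‖)]
  have hρ : 0 < ρ := hδρ.trans_lt' (by positivity)
  have hnorm (z) (hz : z ∈ ball b ρ) : 2 ≤ ‖z‖ ∧ ‖b‖ / 2 ≤ ‖z‖ ∧ ‖z‖ ≤ 2 * ‖b‖ := by
    have := abs_le.1 (abs_norm_sub_norm_le z b)
    have := mem_ball_iff_norm.1 hz
    refine ⟨?_, ?_, ?_⟩ <;> linarith
  have hΛ : c * ‖b‖ * log ‖b‖ ≤ ‖deriv g b‖ := by simpa [hgb] using (hlog b (mem_ball_self hρ)).1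
  refine existsUnique_mem_ball_eq_one hf hg hgb (fun z hz hgz => ?_) (fun z hz => ?_)
    (fun z hz => ?_) (by positivity) hδρ hWδ (herr.trans (by linarith)) (hη.trans_le (by gcongr))
  · have h1 : 1 < ‖z‖ := by linarith [hnorm z hz]
    have := (hlog z hz).1
    rw [hgz, div_zero, norm_zero] at this
    linarith [mul_pos (mul_pos hc (one_pos.trans h1)) (log_pos h1)]
  · have := mul_log_le_four_mul_mul_log (by linarith [hnorm z hz]) (hnorm z hz).2.2 (by linarith)
    nlinarith [(hlog z hz).2]
  · refine (hfg z hz).trans (mul_le_mul_of_nonneg_right ?_ (norm_nonneg _))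
    rw [div_le_div_iff₀ (by linarith [hnorm z hz]) (by linarith)]
    nlinarith [hnorm z hz]

theorem stmt_12_general (V : Set ℂ)
    (f g : ℂ → ℂ) (hf : DifferentiableOn ℂ f V) (hg : DifferentiableOn ℂ g V)
    (B : ℝ) (hB : 0 < B)
    (hfg : ∀ z ∈ V, ‖f z - g z‖ ≤ B / ‖z‖ * ‖g z‖)
    (c C : ℝ) (hc : 0 < c) (hcC : c < C)
    (hlog : ∀ z ∈ V,
      c * ‖z‖ * Real.log (‖z‖) ≤ ‖deriv g z / g z‖ ∧
      ‖deriv g z / g z‖ ≤ C * ‖z‖ * Real.log (‖z‖))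
    (r₀ ρ₀ : ℝ) (hρ₀ : 0 < ρ₀)
    (hdisc : ∀ w ∈ V, (f w = 1 ∨ g w = 1) → r₀ < ‖w‖ →
      Metric.closedBall w ρ₀ ⊆ V) :
    ∃ R > (0 : ℝ), ∀ b ∈ V, g b = 1 → R < ‖b‖ →
      ∃! a : ℂ, a ∈ V ∧ f a = 1 ∧ ‖b - a‖ < (‖b‖ ^ 2)⁻¹ := by
  obtain ⟨R, hR⟩ := eventually_atTop.1 ((eventually_gt_atTop r₀).and
    (eventually_isRootScale (B := B) hc (hc.trans hcC) hρ₀))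
  refine ⟨max R 1, by positivity, fun b hb hgb hbR => ?_⟩
  obtain ⟨hr₀, hr⟩ := hR ‖b‖ ((le_max_left _ _).trans hbR.le)
  have hball : ball b ρ₀ ⊆ V := ball_subset_closedBall.trans (hdisc b hb (Or.inr hgb) hr₀)
  have hδ : ball b (‖b‖ ^ 2)⁻¹ ⊆ V := (ball_subset_ball (by linarith [hr.2.1])).trans hball
  obtain ⟨a, ⟨ha, hfa⟩, huniq⟩ := existsUnique_mem_ball_inv_sq_eq_one (hf.mono hball)
    (hg.mono hball) hB hc (hc.trans hcC) (fun z hz => hfg z (hball hz))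
    (fun z hz => hlog z (hball hz)) hgb hr
  refine ⟨a, ⟨hδ ha, hfa, ?_⟩, fun y ⟨_, hfy, hy⟩ => huniq y ⟨?_, hfy⟩⟩
  · rwa [mem_ball_iff_norm'] at ha
  · rwa [mem_ball_iff_norm']

theorem stmt_12 (V : Set ℂ) (hV : IsOpen V)
    (hVr : ∀ r : ℝ, 0 < r → ∃ z ∈ V, r < ‖z‖)
    (f g : ℂ → ℂ) (hf : DifferentiableOn ℂ f V) (hg : DifferentiableOn ℂ g V)
    (B : ℝ) (hB : 0 < B)
    (hfg : ∀ z ∈ V, ‖f z - g z‖ ≤ B / ‖z‖ * ‖g z‖)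
    (c C : ℝ) (hc : 0 < c) (hcC : c < C)
    (hlog : ∀ z ∈ V,
      c * ‖z‖ * Real.log (‖z‖) ≤ ‖deriv g z / g z‖ ∧
      ‖deriv g z / g z‖ ≤ C * ‖z‖ * Real.log (‖z‖))
    (r₀ ρ₀ : ℝ) (hr₀ : 0 < r₀) (hρ₀ : 0 < ρ₀)
    (hdisc : ∀ w ∈ V, (f w = 1 ∨ g w = 1) → r₀ < ‖w‖ →
      Metric.closedBall w ρ₀ ⊆ V) :
    ∃ R > (0 : ℝ), ∀ b ∈ V, g b = 1 → R < ‖b‖ →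
      ∃! a : ℂ, a ∈ V ∧ f a = 1 ∧ ‖b - a‖ < (‖b‖ ^ 2)⁻¹ :=
  stmt_12_general V f g hf hg B hB hfg c C hc hcC hlog r₀ ρ₀ hρ₀ hdisc
end

section
/- Under hypotheses (a), (b), (c) of the preceding theorem, there exists R such that every zero of f(z) − 1 in V with |z| > R is a simple zero (i.e. f'(z) ≠ 0 there). -/
/-!
Near a large solution `a` of `f = 1` the bound `‖g'/g‖ ≤ C‖z‖ log ‖z‖` keeps `g` zero-free on a
disc around `a`, because zeros of `g` are poles of `g'/g`. So `f/g` is holomorphic on that disc and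
within `O(1/‖a‖)` of `1`, and Cauchy's estimate gives `f'(a)/f(a) - g'(a)/g(a) = (f/g)'(a) g(a)/f(a)
= O(1/‖a‖)`. Since `‖g'(a)/g(a)‖ ≥ c‖a‖ log ‖a‖` is large, `f'(a) ≠ 0`.
-/

open Filter Topology Metric

theorem AnalyticAt.tendsto_norm_logDeriv_atTop {𝕜 : Type*} [NontriviallyNormedField 𝕜]
    [CompleteSpace 𝕜] [CharZero 𝕜] {g : 𝕜 → 𝕜} {z₀ : 𝕜} (hg : AnalyticAt 𝕜 g z₀)
    (hz₀ : g z₀ = 0) (hne : ∃ᶠ z in 𝓝[≠] z₀, g z ≠ 0) :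
    Tendsto (fun z => ‖logDeriv g z‖) (𝓝[≠] z₀) atTop := by
  have horder_ne_top : meromorphicOrderAt g z₀ ≠ ⊤ := by
    rwa [Ne, meromorphicOrderAt_eq_top_iff, not_eventually]
  have horder_ne_zero : meromorphicOrderAt g z₀ ≠ 0 := by
    simpa [hg.meromorphicOrderAt_eq, hg.analyticOrderAt_ne_zero] using hz₀
  rw [tendsto_norm_atTop_iff_cobounded]
  refine tendsto_cobounded_of_meromorphicOrderAt_neg ?_
  rw [meromorphicOrderAt_logDeriv_eq_neg_one hg.meromorphicAt horder_ne_zero horder_ne_top]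
  decide

theorem DifferentiableOn.apply_ne_zero_of_norm_logDeriv_le {U : Set ℂ} {g : ℂ → ℂ} {φ : ℂ → ℝ}
    (hg : DifferentiableOn ℂ g U) (hU : IsOpen U) (hUc : IsPreconnected U)
    (hφ : ContinuousOn φ U) (hbound : ∀ z ∈ U, ‖logDeriv g z‖ ≤ φ z)
    {w : ℂ} (hw : w ∈ U) (hgw : g w ≠ 0) {z₀ : ℂ} (hz₀ : z₀ ∈ U) : g z₀ ≠ 0 := by
  have hgan : AnalyticOnNhd ℂ g U := hg.analyticOnNhd hU
  intro hgz₀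
  by_cases hne : ∃ᶠ z in 𝓝[≠] z₀, g z ≠ 0
  · have hbig := ((hgan z₀ hz₀).tendsto_norm_logDeriv_atTop hgz₀ hne).eventually_gt_atTop
      (φ z₀ + 1)
    have hsmall : ∀ᶠ z in 𝓝[≠] z₀, ‖logDeriv g z‖ ≤ φ z₀ + 1 := by
      have hφ' : ∀ᶠ z in 𝓝 z₀, φ z < φ z₀ + 1 :=
        (hφ.continuousAt (hU.mem_nhds hz₀)).eventually_lt continuousAt_const (lt_add_one _)
      filter_upwards [nhdsWithin_le_nhds (hφ'.and (hU.mem_nhds hz₀))] with z hz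
      exact (hbound z hz.2).trans hz.1.le
    obtain ⟨z, hz⟩ := (hbig.and hsmall).exists
    exact hz.2.not_gt hz.1
  · rw [not_frequently] at hne
    simp only [ne_eq, not_not] at hne
    exact hgw (hgan.eqOn_zero_of_preconnected_of_frequently_eq_zero hUc hz₀ hne.frequently hw)

theorem norm_logDeriv_sub_logDeriv_le {f g : ℂ → ℂ} {a : ℂ} {r ε : ℝ} (hr : 0 < r)
    (hf : DifferentiableOn ℂ f (closedBall a r)) (hg : DifferentiableOn ℂ g (closedBall a r))
    (hg0 : ∀ z ∈ closedBall a r, g z ≠ 0) (hfa : f a ≠ 0)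
    (hε : ∀ z ∈ sphere a r, ‖f z / g z - 1‖ ≤ ε) :
    ‖logDeriv f a - logDeriv g a‖ ≤ ε / r * ‖g a / f a‖ := by
  have hnhds : closedBall a r ∈ 𝓝 a := closedBall_mem_nhds a hr
  have hcauchy : ‖deriv (fun z => f z / g z - 1) a‖ ≤ ε / r :=
    Complex.norm_deriv_le_of_forall_mem_sphere_norm_le hr
      (((hf.div hg hg0).sub_const 1).diffContOnCl_ball subset_rfl) hε
  rw [deriv_sub_const] at hcauchy
  rw [← logDeriv_div a hfa (hg0 a (mem_closedBall_self hr.le)) (hf.differentiableAt hnhds)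
    (hg.differentiableAt hnhds), logDeriv_apply, norm_div, div_eq_mul_inv, ← norm_inv, inv_div]
  gcongr

theorem norm_div_sub_one_le_of_mem_sphere {f g : ℂ → ℂ} {a : ℂ} {r B : ℝ} (hB : 0 ≤ B)
    (hr : r < ‖a‖) (hg0 : ∀ z ∈ sphere a r, g z ≠ 0)
    (hfg : ∀ z ∈ sphere a r, ‖f z - g z‖ ≤ B / ‖z‖ * ‖g z‖) :
    ∀ z ∈ sphere a r, ‖f z / g z - 1‖ ≤ B / (‖a‖ - r) := by
  intro z hz
  have hnorm : ‖a‖ - r ≤ ‖z‖ := by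
    have := norm_sub_norm_le a z
    rw [← dist_eq_norm, dist_comm, mem_sphere.1 hz] at this
    linarith
  calc ‖f z / g z - 1‖ = ‖f z - g z‖ / ‖g z‖ := by rw [div_sub_one (hg0 z hz), norm_div]
    _ ≤ B / ‖z‖ := (div_le_iff₀ (norm_pos_iff.2 (hg0 z hz))).2 (hfg z hz)
    _ ≤ B / (‖a‖ - r) := div_le_div_of_nonneg_left hB (by linarith) hnorm

section NearOne

variable {𝕜 : Type*} [NormedDivisionRing 𝕜] {w : 𝕜}

theorem ne_zero_of_norm_one_sub_le_half_mul (h : ‖1 - w‖ ≤ 1 / 2 * ‖w‖) : w ≠ 0 := by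
  rintro rfl
  norm_num at h

theorem norm_le_two_of_norm_one_sub_le_half_mul (h : ‖1 - w‖ ≤ 1 / 2 * ‖w‖) : ‖w‖ ≤ 2 := by
  have := norm_le_norm_add_norm_sub' w 1
  rw [norm_one, norm_sub_rev] at this
  linarith

end NearOne

theorem continuous_mul_norm_mul_log_norm (C : ℝ) :
    Continuous fun z : ℂ => C * ‖z‖ * Real.log ‖z‖ := by
  simpa only [Function.comp_def, mul_assoc] using
    (Real.continuous_mul_log.comp continuous_norm).const_mul C

theorem eventually_div_sub_lt_mul_log {c : ℝ} (hc : 0 < c) (K r : ℝ) :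
    ∀ᶠ x in atTop, K / (x - r) < c * x * Real.log x := by
  have hsmall : Tendsto (fun x => K / (x - r)) atTop (𝓝 0) :=
    tendsto_const_nhds.div_atTop (tendsto_atTop_add_const_right _ (-r) tendsto_id)
  have hlarge : Tendsto (fun x => c * x * Real.log x) atTop atTop :=
    (tendsto_id.const_mul_atTop hc).atTop_mul_atTop₀ Real.tendsto_log_atTop
  filter_upwards [hsmall.eventually (gt_mem_nhds zero_lt_one), hlarge.eventually_gt_atTop 1]
    with x hx₁ hx₂
  linarith

theorem stmt_13_general (V : Set ℂ)
    (f g : ℂ → ℂ) (hf : DifferentiableOn ℂ f V) (hg : DifferentiableOn ℂ g V)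
    (B : ℝ) (hB : 0 < B)
    (hfg : ∀ z ∈ V, ‖f z - g z‖ ≤ B / ‖z‖ * ‖g z‖)
    (c C : ℝ) (hc : 0 < c)
    (hlog : ∀ z ∈ V,
      c * ‖z‖ * Real.log (‖z‖) ≤ ‖deriv g z / g z‖ ∧
      ‖deriv g z / g z‖ ≤ C * ‖z‖ * Real.log (‖z‖))
    (r₀ ρ₀ : ℝ) (hρ₀ : 0 < ρ₀)
    (hdisc : ∀ w ∈ V, (f w = 1 ∨ g w = 1) → r₀ < ‖w‖ →
      Metric.closedBall w ρ₀ ⊆ V) :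
    ∃ R : ℝ, ∀ z ∈ V, f z = 1 → R < ‖z‖ → deriv f z ≠ 0 := by
  obtain ⟨r, hr, hrρ₀⟩ : ∃ r, 0 < r ∧ r < ρ₀ := ⟨ρ₀ / 2, by positivity, by linarith⟩
  obtain ⟨R, hR⟩ := eventually_atTop.1 <| (eventually_gt_atTop r₀).and <|
    (eventually_gt_atTop r).and <| (eventually_ge_atTop (2 * B)).and <|
    eventually_div_sub_lt_mul_log hc (2 * B / r) r
  refine ⟨R, fun a ha hfa haR hf'a => ?_⟩
  obtain ⟨har₀, har, haB, hlarge⟩ := hR ‖a‖ haR.le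
  have hball : closedBall a ρ₀ ⊆ V := hdisc a ha (Or.inl hfa) har₀
  have hsub : closedBall a r ⊆ V := (closedBall_subset_closedBall hrρ₀.le).trans hball
  have hga : ‖1 - g a‖ ≤ 1 / 2 * ‖g a‖ := by
    have hBa : B / ‖a‖ ≤ 1 / 2 := by rw [div_le_iff₀ (by linarith)]; linarith
    exact hfa ▸ (hfg a ha).trans (mul_le_mul_of_nonneg_right hBa (norm_nonneg _))
  have hg0 : ∀ z ∈ closedBall a r, g z ≠ 0 := fun z hz =>
    (hg.mono (ball_subset_closedBall.trans hball)).apply_ne_zero_of_norm_logDeriv_le isOpen_ball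
      (convex_ball a ρ₀).isPreconnected (continuous_mul_norm_mul_log_norm C).continuousOn
      (fun z hz => (hlog z (hball (ball_subset_closedBall hz))).2) (mem_ball_self hρ₀)
      (ne_zero_of_norm_one_sub_le_half_mul hga) (closedBall_subset_ball hrρ₀ hz)
  have hquot := norm_div_sub_one_le_of_mem_sphere hB.le har
    (fun z hz => hg0 z (sphere_subset_closedBall hz))
    (fun z hz => hfg z (hsub (sphere_subset_closedBall hz)))
  have hcmp := norm_logDeriv_sub_logDeriv_le hr (hf.mono hsub) (hg.mono hsub) hg0
    (by simp [hfa]) hquot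
  rw [logDeriv_apply f, hf'a, zero_div, zero_sub, norm_neg, hfa, div_one] at hcmp
  refine lt_irrefl (c * ‖a‖ * Real.log ‖a‖) ?_
  calc c * ‖a‖ * Real.log ‖a‖ ≤ ‖logDeriv g a‖ := (hlog a ha).1
    _ ≤ B / (‖a‖ - r) / r * ‖g a‖ := hcmp
    _ ≤ B / (‖a‖ - r) / r * 2 := by gcongr; exact norm_le_two_of_norm_one_sub_le_half_mul hga
    _ = 2 * B / r / (‖a‖ - r) := by ring
    _ < c * ‖a‖ * Real.log ‖a‖ := hlarge

theorem stmt_13 (V : Set ℂ) (hV : IsOpen V)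
    (hVr : ∀ r : ℝ, 0 < r → ∃ z ∈ V, r < ‖z‖)
    (f g : ℂ → ℂ) (hf : DifferentiableOn ℂ f V) (hg : DifferentiableOn ℂ g V)
    (B : ℝ) (hB : 0 < B)
    (hfg : ∀ z ∈ V, ‖f z - g z‖ ≤ B / ‖z‖ * ‖g z‖)
    (c C : ℝ) (hc : 0 < c) (hcC : c < C)
    (hlog : ∀ z ∈ V,
      c * ‖z‖ * Real.log (‖z‖) ≤ ‖deriv g z / g z‖ ∧
      ‖deriv g z / g z‖ ≤ C * ‖z‖ * Real.log (‖z‖))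
    (r₀ ρ₀ : ℝ) (hr₀ : 0 < r₀) (hρ₀ : 0 < ρ₀)
    (hdisc : ∀ w ∈ V, (f w = 1 ∨ g w = 1) → r₀ < ‖w‖ →
      Metric.closedBall w ρ₀ ⊆ V) :
    ∃ R : ℝ, ∀ z ∈ V, f z = 1 → R < ‖z‖ → deriv f z ≠ 0 :=
  stmt_13_general V f g hf hg B hB hfg c C hc hlog r₀ ρ₀ hρ₀ hdisc
end

section
/- Let g be holomorphic on the closed disc D̄(b, |b|^{−3/2}) with g(b) = 1, |g(z)| ≤ 2 on the boundary |z−b| = |b|^{−3/2}, and |g'(b)| ≥ c|b|log|b|. Then for |b| sufficiently large (depending only on c) and for all z with |z − b| ≤ |b|^{−2}, one has |g(z) − 1| ≥ (c' |b| log|b|) |z − b| for some constant c' > 0 depending only on c; in particular b is the only solution of g(z) = 1 in the disc |z − b| ≤ |b|^{−2}, and it is simple. -/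
/-!
Cauchy's estimates on the circle `|z - b| = |b|^(-3/2)` bound the `n`-th Taylor coefficient of `g`
at `b` by `2 |b|^(3n/2)`, so for `|z - b| ≤ |b|^(-2)` everything beyond the linear term is at most
`4 |b| |z - b|`. Once `c log |b| ≥ 8`, the linear term `g'(b) (z - b)`, of size at least
`c |b| log |b| |z - b|`, dominates it with half of its size to spare.
-/

open Metric
open scoped Nat

namespace Complex

variable {E : Type*} [NormedAddCommGroup E] [NormedSpace ℂ E] [CompleteSpace E]
  {f : ℂ → E} {c z : ℂ} {R M : ℝ}

theorem norm_taylorSeries_term_le (hR : 0 < R) (hf : DiffContOnCl ℂ f (ball c R))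
    (hM : ∀ w ∈ sphere c R, ‖f w‖ ≤ M) (n : ℕ) :
    ‖(n ! : ℂ)⁻¹ • (z - c) ^ n • iteratedDeriv n f c‖ ≤ M * (‖z - c‖ / R) ^ n := by
  have hn : (0 : ℝ) < n ! := mod_cast n.factorial_pos
  rw [norm_smul, norm_smul, norm_inv, norm_natCast, norm_pow, div_pow]
  calc (n ! : ℝ)⁻¹ * (‖z - c‖ ^ n * ‖iteratedDeriv n f c‖)
      ≤ (n ! : ℝ)⁻¹ * (‖z - c‖ ^ n * (n ! * M / R ^ n)) := by
        gcongr
        exact norm_iteratedDeriv_le_of_forall_mem_sphere_norm_le n hR hf hM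
    _ = M * (‖z - c‖ ^ n / R ^ n) := by field_simp

theorem norm_sub_sub_smul_deriv_le (hR : 0 < R) (hf : DiffContOnCl ℂ f (ball c R))
    (hM : ∀ w ∈ sphere c R, ‖f w‖ ≤ M) (hz : ‖z - c‖ ≤ R / 2) :
    ‖f z - f c - (z - c) • deriv f c‖ ≤ 2 * M * (‖z - c‖ / R) ^ 2 := by
  set q := ‖z - c‖ / R
  have hq0 : 0 ≤ q := by positivity
  have hq : q ≤ 1 / 2 := by rwa [div_le_iff₀ hR, div_mul_eq_mul_div, one_mul]
  have hM0 : 0 ≤ M := by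
    obtain ⟨w, hw⟩ := (NormedSpace.sphere_nonempty (x := c)).2 hR.le
    exact (norm_nonneg _).trans (hM w hw)
  have hzR : z ∈ ball c R := mem_ball_iff_norm.2 (by linarith)
  have htaylor := (hasSum_nat_add_iff' 2).2 (hasSum_taylorSeries_on_ball hf.differentiableOn hzR)
  have hfirst : ∑ i ∈ Finset.range 2, (i ! : ℂ)⁻¹ • (z - c) ^ i • iteratedDeriv i f c =
      f c + (z - c) • deriv f c := by
    simp [Finset.sum_range_succ, iteratedDeriv_one]
  rw [hfirst, ← sub_sub] at htaylor
  have hgeom : HasSum (fun n ↦ M * q ^ (n + 2)) (M * q ^ 2 * (1 - q)⁻¹) := by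
    have h := (hasSum_geometric_of_lt_one hq0 (by linarith)).mul_left (M * q ^ 2)
    rwa [show (fun n ↦ M * q ^ 2 * q ^ n) = fun n ↦ M * q ^ (n + 2) by ext n; ring] at h
  calc ‖f z - f c - (z - c) • deriv f c‖ ≤ M * q ^ 2 * (1 - q)⁻¹ :=
        htaylor.norm_le_of_bounded hgeom fun n ↦ norm_taylorSeries_term_le hR hf hM (n + 2)
    _ ≤ M * q ^ 2 * 2 := by
        gcongr
        rw [inv_le_comm₀ (by linarith) two_pos]
        linarith
    _ = 2 * M * q ^ 2 := by ring

end Complex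

theorem mul_norm_le_norm_of_norm_sub_smul_le {𝕜 E : Type*} [NormedField 𝕜]
    [NormedAddCommGroup E] [NormedSpace 𝕜 E] {x : 𝕜} {d y : E} {K : ℝ}
    (h : ‖y - x • d‖ ≤ K * ‖x‖) : (‖d‖ - K) * ‖x‖ ≤ ‖y‖ := by
  have := norm_le_norm_add_norm_sub y (x • d)
  rw [norm_smul] at this
  linarith

theorem rpow_neg_three_halves_bounds_of_le_inv_sq {A t : ℝ} (hA : 4 ≤ A) (ht0 : 0 ≤ t)
    (ht : t ≤ (A ^ 2)⁻¹) :
    t ≤ A ^ (-(3 / 2) : ℝ) / 2 ∧ (t / A ^ (-(3 / 2) : ℝ)) ^ 2 ≤ A * t := by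
  obtain ⟨s, hs, rfl⟩ : ∃ s, 2 ≤ s ∧ A = s ^ 2 :=
    ⟨√A, Real.le_sqrt_of_sq_le (by linarith), (Real.sq_sqrt (by linarith)).symm⟩
  have hpow : (s ^ 2) ^ (-(3 / 2) : ℝ) = (s ^ 3)⁻¹ := by
    rw [Real.rpow_neg (by positivity), Real.rpow_div_two_eq_sqrt _ (by positivity),
      Real.sqrt_sq (by linarith)]
    norm_cast
  have hts : t * s ^ 4 ≤ 1 := by
    rwa [← one_div, le_div_iff₀ (by positivity), ← pow_mul] at ht
  rw [hpow, div_inv_eq_mul]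
  constructor
  · rw [← one_div, le_div_iff₀ two_pos, le_div_iff₀ (by positivity)]
    nlinarith [mul_le_mul_of_nonneg_left hs (by positivity : 0 ≤ t * s ^ 3)]
  · nlinarith [mul_le_mul_of_nonneg_right hts (by positivity : 0 ≤ t * s ^ 2)]

theorem stmt_15 (c : ℝ) (hc : 0 < c) :
    ∃ c' > (0 : ℝ), ∃ R > (0 : ℝ), ∀ b : ℂ, R < ‖b‖ →
      ∀ g : ℂ → ℂ,
        DifferentiableOn ℂ g (Metric.closedBall b (‖b‖ ^ (-(3 / 2) : ℝ))) →
        g b = 1 →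
        (∀ z : ℂ, ‖z - b‖ = ‖b‖ ^ (-(3 / 2) : ℝ) →
          ‖g z‖ ≤ 2) →
        c * ‖b‖ * Real.log (‖b‖) ≤ ‖deriv g b‖ →
        (∀ z : ℂ, ‖z - b‖ ≤ (‖b‖ ^ 2)⁻¹ →
          c' * ‖b‖ * Real.log (‖b‖) * ‖z - b‖ ≤
            ‖g z - 1‖) ∧
        (∀ z : ℂ, ‖z - b‖ ≤ (‖b‖ ^ 2)⁻¹ → g z = 1 → z = b) ∧
        deriv g b ≠ 0 := by
  refine ⟨c / 2, half_pos hc, max (Real.exp (8 / c)) 4, by positivity, ?_⟩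
  intro b hb g hg hgb hbd hder
  have hb4 : 4 ≤ ‖b‖ := (le_max_right _ _).trans hb.le
  have hlog : 8 ≤ c * Real.log ‖b‖ := by
    rw [← div_le_iff₀' hc, Real.le_log_iff_exp_le (by linarith)]
    exact (le_max_left _ _).trans hb.le
  have hc' : 0 < c / 2 * ‖b‖ * Real.log ‖b‖ := by nlinarith
  have hlinear (z : ℂ) (hz : ‖z - b‖ ≤ (‖b‖ ^ 2)⁻¹) :
      ‖g z - 1 - (z - b) • deriv g b‖ ≤ 4 * ‖b‖ * ‖z - b‖ := by
    obtain ⟨hhalf, hsq⟩ := rpow_neg_three_halves_bounds_of_le_inv_sq hb4 (norm_nonneg _) hz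
    have := Complex.norm_sub_sub_smul_deriv_le (by positivity) (hg.diffContOnCl_ball subset_rfl)
      (fun w hw ↦ hbd w (mem_sphere_iff_norm.1 hw)) hhalf
    rw [hgb] at this
    linarith
  have hlower (z : ℂ) (hz : ‖z - b‖ ≤ (‖b‖ ^ 2)⁻¹) :
      c / 2 * ‖b‖ * Real.log ‖b‖ * ‖z - b‖ ≤ ‖g z - 1‖ :=
    le_trans (by gcongr; nlinarith) (mul_norm_le_norm_of_norm_sub_smul_le (hlinear z hz))
  refine ⟨hlower, fun z hz hz1 ↦ ?_, norm_pos_iff.1 (by nlinarith)⟩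
  have := hlower z hz
  rw [hz1, sub_self, norm_zero] at this
  exact sub_eq_zero.1 (norm_le_zero_iff.1 (nonpos_of_mul_nonpos_right this hc'))
end
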